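/- arXiv:1706.08090 — 2 statements merged into one kernel-verified Lean document; each statement's English description precedes it below -/
import Mathlib

section
/- Let φ_1,...,φ_t ∈ {0,1}^M be a history of binary feature vectors, and for each coordinate i define the empirical density ρ_t^i(b) = (1/t)|{k : φ_{k,i} = b}| for b ∈ {0,1}. Then for any φ ∈ {0,1}^M, the product density ρ_t(φ) = ∏_{i=1}^M ρ_t^i(φ_i) satisfies ρ_t(φ) ≤ (1/t) ∑_{k=1}^t Sim(φ, φ_k), where Sim(φ,ψ) = 1 − (1/M)‖φ−ψ‖₁ is the Hamming similarity. -/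
theorem visit_density_le_avg_similarity (M t : ℕ) (hM : 0 < M) (ht : 0 < t)
    (hist : Fin t → Fin M → ℝ) (φ : Fin M → ℝ)
    (hhist : ∀ k i, hist k i = 0 ∨ hist k i = 1)
    (hφ : ∀ i, φ i = 0 ∨ φ i = 1) :
    (∏ i, ((Finset.univ.filter (fun k => hist k i = φ i)).card : ℝ) / (t:ℝ))
      ≤ (1 / (t:ℝ)) * ∑ k, (1 - (1 / (M:ℝ)) * ∑ i, |φ i - hist k i|) := by
  have htR : (0:ℝ) < t := by exact_mod_cast ht
  have hMR : (0:ℝ) < M := by exact_mod_cast hM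
  set c : Fin M → ℝ := fun i => ((Finset.univ.filter (fun k => hist k i = φ i)).card : ℝ) / t with hc
  have hcard : ∀ i, ((Finset.univ.filter (fun k => hist k i = φ i)).card : ℝ)
      = ∑ k, (1 - |φ i - hist k i|) := by
    intro i
    rw [Finset.card_filter]
    push_cast
    refine Finset.sum_congr rfl fun k _ => ?_
    rcases hhist k i with h | h <;> rcases hφ i with h' | h' <;>
      simp [h, h'] <;> norm_num
  have hc0 : ∀ i, 0 ≤ c i := fun i => by positivity
  have hc1 : ∀ i, c i ≤ 1 := by
    intro i
    rw [hc]
    simp only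
    rw [div_le_one htR]
    exact_mod_cast (Finset.card_filter_le _ _).trans (by simp)
  have hprod : ∀ j, ∏ i, c i ≤ c j := by
    intro j
    rw [← Finset.mul_prod_erase Finset.univ c (Finset.mem_univ j)]
    exact mul_le_of_le_one_right (hc0 j)
      (Finset.prod_le_one (fun i _ => hc0 i) (fun i _ => hc1 i))
  have havg : ∏ i, c i ≤ (1/(M:ℝ)) * ∑ i, c i := by
    have h1 : ∑ _i : Fin M, (∏ j, c j) ≤ ∑ i, c i :=
      Finset.sum_le_sum (fun i _ => hprod i)
    rw [Finset.sum_const, Finset.card_univ, Fintype.card_fin, nsmul_eq_mul] at h1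
    rw [one_div, inv_mul_eq_div, le_div_iff₀ hMR]
    linarith
  have hRHS : (1 / (t:ℝ)) * ∑ k, (1 - (1 / (M:ℝ)) * ∑ i, |φ i - hist k i|)
      = (1/(M:ℝ)) * ∑ i, c i := by
    have hsum : ∑ i, c i = (∑ i, ∑ k, (1 - |φ i - hist k i|)) / t := by
      rw [← Finset.sum_div]
      exact congrArg (· / (t:ℝ)) (Finset.sum_congr rfl fun i _ => hcard i)
    rw [hsum, Finset.sum_comm]
    simp only [Finset.sum_sub_distrib, Finset.sum_const, Finset.card_univ,
      Fintype.card_fin, nsmul_eq_mul, mul_one, Finset.mul_sum]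
    field_simp
    simp only [← Finset.sum_div]
    field_simp
  calc (∏ i, ((Finset.univ.filter (fun k => hist k i = φ i)).card : ℝ) / (t:ℝ))
      = ∏ i, c i := rfl
    _ ≤ (1/(M:ℝ)) * ∑ i, c i := havg
    _ = _ := hRHS.symm
end

section
/- With the setup of the feature visit-density theorem, the naive φ-pseudocount Ñ_t(φ) = t · ρ_t(φ) satisfies Ñ_t(φ) ≤ ∑_{k=1}^t Sim(φ, φ_k), i.e., it is bounded above by the total Hamming similarity of φ to the visited feature vectors. -/
theorem naive_pseudocount_le_total_similarity (M t : ℕ) (hM : 0 < M) (ht : 0 < t)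
    (hist : Fin t → Fin M → ℝ) (φ : Fin M → ℝ)
    (hhist : ∀ k i, hist k i = 0 ∨ hist k i = 1)
    (hφ : ∀ i, φ i = 0 ∨ φ i = 1) :
    (t:ℝ) * (∏ i, ((Finset.univ.filter (fun k => hist k i = φ i)).card : ℝ) / (t:ℝ))
      ≤ ∑ k, (1 - (1 / (M:ℝ)) * ∑ i, |φ i - hist k i|) := by
  have htR : (0:ℝ) < t := by exact_mod_cast ht
  have hMR : (0:ℝ) < M := by exact_mod_cast hM
  set c : Fin M → ℝ := fun i => ((Finset.univ.filter (fun k => hist k i = φ i)).card : ℝ) with hcdef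
  set b : Fin M → ℝ := fun i => c i / t with hbdef
  have hb0 : ∀ i, 0 ≤ b i := fun i => div_nonneg (Nat.cast_nonneg _) htR.le
  have hb1 : ∀ i, b i ≤ 1 := by
    intro i
    have : (Finset.univ.filter (fun k => hist k i = φ i)).card ≤ t := by
      have := Finset.card_filter_le (Finset.univ : Finset (Fin t)) (fun k => hist k i = φ i)
      simpa using this
    have hcast : (((Finset.univ.filter (fun k => hist k i = φ i)).card : ℝ)) ≤ t := by
      exact_mod_cast this
    simpa [hbdef, hcdef, div_le_one htR] using hcast
  -- product ≤ each factor
  have hprod_le : ∀ j, (∏ i, b i) ≤ b j := by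
    intro j
    rw [← Finset.mul_prod_erase Finset.univ b (Finset.mem_univ j)]
    have h1 : (∏ i ∈ Finset.univ.erase j, b i) ≤ 1 :=
      Finset.prod_le_one (fun i _ => hb0 i) (fun i _ => hb1 i)
    exact mul_le_of_le_one_right (hb0 j) h1
  -- product ≤ average
  have hprod_avg : (∏ i, b i) ≤ (1 / (M:ℝ)) * ∑ i, b i := by
    have hsum : (M:ℝ) * (∏ i, b i) ≤ ∑ i, b i := by
      calc (M:ℝ) * (∏ i, b i) = ∑ _j : Fin M, (∏ i, b i) := by
            simp [Finset.sum_const, Finset.card_univ, mul_comm]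
        _ ≤ ∑ j, b j := Finset.sum_le_sum (fun j _ => hprod_le j)
    rw [one_div, inv_mul_eq_div, le_div_iff₀ hMR, mul_comm]
    exact hsum
  -- rewrite RHS
  have hterm : ∀ k i, 1 - |φ i - hist k i| = if hist k i = φ i then (1:ℝ) else 0 := by
    intro k i
    rcases hhist k i with h | h <;> rcases hφ i with h' | h' <;>
      simp [h, h'] <;> norm_num
  have hRHS : (∑ k, (1 - (1 / (M:ℝ)) * ∑ i, |φ i - hist k i|)) = (1 / (M:ℝ)) * ∑ i, c i := by
    have hk : ∀ k : Fin t, (1 - (1 / (M:ℝ)) * ∑ i, |φ i - hist k i|)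
        = (1 / (M:ℝ)) * ∑ i, (1 - |φ i - hist k i|) := by
      intro k
      rw [Finset.sum_sub_distrib, Finset.sum_const, Finset.card_univ, Fintype.card_fin,
        nsmul_eq_mul, mul_one, mul_sub, one_div, inv_mul_cancel₀ hMR.ne']
    rw [Finset.sum_congr rfl (fun k _ => hk k), ← Finset.mul_sum]
    congr 1
    rw [Finset.sum_comm]
    refine Finset.sum_congr rfl (fun i _ => ?_)
    rw [Finset.sum_congr rfl (fun k _ => hterm k i)]
    simp [hcdef, Finset.sum_ite_eq, Finset.sum_boole]
  rw [hRHS]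
  have hsumc : ∑ i, b i = (∑ i, c i) / t := by
    simp [hbdef, Finset.sum_div]
  calc (t:ℝ) * (∏ i, b i) ≤ (t:ℝ) * ((1 / (M:ℝ)) * ∑ i, b i) :=
        mul_le_mul_of_nonneg_left hprod_avg htR.le
    _ = (1 / (M:ℝ)) * ∑ i, c i := by
        rw [hsumc]; field_simp
end
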